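/- With r(z) = √(2/η)/cosh(z), the function θ(φ,z) = φ − (δμ/η)·tanh(z) satisfies the transport equation (1 + δ²/2)∂_φθ + δ ∂_zθ = 1 + (δ²/2)(1 − μ r(z)²), for all real φ, z, where η > 0, μ, δ ∈ ℝ. -/
import Mathlib


/-- The phase function `θ(φ,z) = φ − (δμ/η) tanh z` satisfies the transport
equation `(1 + δ²/2)∂_φθ + δ ∂_zθ = 1 + (δ²/2)(1 − μ r(z)²)` with
`r(z) = √(2/η)/cosh z`. -/
theorem normal_form_phase_equation (η μ δ : ℝ) (hη : 0 < η) :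
    let r : ℝ → ℝ := fun z => Real.sqrt (2 / η) / Real.cosh z
    let θ : ℝ → ℝ → ℝ := fun φ z => φ - δ * μ / η * Real.tanh z
    ∀ φ z : ℝ,
      (1 + δ ^ 2 / 2) * deriv (fun φ' => θ φ' z) φ + δ * deriv (fun z' => θ φ z') z
        = 1 + δ ^ 2 / 2 * (1 - μ * (r z) ^ 2) := by
  intro r θ φ z
  have h1 : deriv (fun φ' => θ φ' z) φ = 1 := by
    simp only [θ]
    rw [deriv_sub_const]
    exact deriv_id φ
  have hc : Real.cosh z ≠ 0 := (Real.cosh_pos z).ne'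
  have htanh : HasDerivAt Real.tanh (1 / Real.cosh z ^ 2) z := by
    have h := (Real.hasDerivAt_sinh z).div (Real.hasDerivAt_cosh z) hc
    have heq : (Real.cosh z * Real.cosh z - Real.sinh z * Real.sinh z) / Real.cosh z ^ 2
        = 1 / Real.cosh z ^ 2 := by
      rw [show Real.cosh z * Real.cosh z - Real.sinh z * Real.sinh z
          = Real.cosh z ^ 2 - Real.sinh z ^ 2 by ring, Real.cosh_sq_sub_sinh_sq]
    rw [heq] at h
    have : Real.tanh = fun x => Real.sinh x / Real.cosh x := by
      funext x; exact Real.tanh_eq_sinh_div_cosh x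
    rw [this]
    exact h
  have h2 : deriv (fun z' => θ φ z') z = -(δ * μ / η) * (1 / Real.cosh z ^ 2) := by
    simp only [θ]
    rw [deriv_const_sub, deriv_const_mul _ htanh.differentiableAt, htanh.deriv]
    ring
  have hsq : Real.sqrt (2 / η) ^ 2 = 2 / η :=
    Real.sq_sqrt (by positivity)
  rw [h1, h2]
  simp only [r, div_pow, hsq]
  field_simp
  ring
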